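/- arXiv:2409.15437 — 6 statements merged into one kernel-verified Lean document; each statement's English description precedes it below -/
import Mathlib

section
/- The Grassmann-Plücker relations hold: for any k×n matrix C over a field, for any indices j₁,...,j_{k-1} and i₁,...,i_{k+1} in {1,...,n}, one has Σ_{l=1}^{k+1} (-1)^{l+1} p_{j₁···j_{k-1}i_l}(C) · p_{i₁···î_l···i_{k+1}}(C) = 0, where p denotes a maximal k×k minor of C indexed by the given columns and the hat denotes omission. -/
/-!
Adjoin to the `(k+1) × (k+2)` matrix `A` of columns `i₁, …, i_{k+2}` of `C` a top row whose
`l`-th entry is `p_{j₁⋯j_k i_l}(C)`. Expanding along the top row, the determinant of this square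
matrix is exactly the Grassmann–Plücker sum. On the other hand, expanding `p_{j₁⋯j_k x}(C)` along
its last column shows that it is a fixed linear combination of the entries of column `x` of `C`,
so the top row is a linear combination of the rows of `A` and the determinant vanishes.
-/

open Matrix

namespace Matrix

variable {R : Type*} [CommRing R]

theorem det_of_cons_vecMul_eq_zero {n : ℕ} (A : Matrix (Fin n) (Fin (n + 1)) R)
    (w : Fin n → R) : det (of (Fin.cons (w ᵥ* A) A)) = 0 := by
  set B : Matrix (Fin (n + 1)) (Fin (n + 1)) R := of (Fin.cons 0 A)
  set c : Fin (n + 1) → R := Fin.cons 0 w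
  have hrow : ∑ r, c r • B r = w ᵥ* A := by
    simp only [Fin.sum_univ_succ, c, B, Fin.cons_zero, Fin.cons_succ, zero_smul, zero_add,
      vecMul_eq_sum]
    rfl
  have hB : of (Fin.cons (w ᵥ* A) A) = B.updateRow 0 (∑ r, c r • B r) := by
    rw [hrow]
    ext r l
    cases r using Fin.cases <;> rfl
  rw [hB, det_updateRow_sum]
  exact zero_smul R _

theorem sum_neg_one_pow_mul_vecMul_mul_det_submatrix_succAbove {n : ℕ}
    (A : Matrix (Fin n) (Fin (n + 1)) R) (w : Fin n → R) :
    ∑ l : Fin (n + 1), (-1) ^ (l : ℕ) * (w ᵥ* A) l * det (A.submatrix id l.succAbove) = 0 := by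
  rw [← det_of_cons_vecMul_eq_zero A w, det_succ_row_zero]
  rfl

theorem det_submatrix_snoc {m : Type*} {k : ℕ} (C : Matrix (Fin (k + 1)) m R) (j : Fin k → m)
    (x : m) :
    det (C.submatrix id (Fin.snoc j x)) =
      ∑ r : Fin (k + 1), (-1) ^ (r + k : ℕ) * C r x * det (C.submatrix r.succAbove j) := by
  rw [det_succ_column _ (Fin.last k)]
  simp [Fin.succAbove_last]

end Matrix

/-- The Grassmann–Plücker relations for maximal minors of a (k+1)×n matrix. -/
theorem stmt_10 {F : Type*} [Field F] (k n : ℕ)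
    (C : Matrix (Fin (k + 1)) (Fin n) F)
    (j : Fin k → Fin n) (i : Fin (k + 2) → Fin n) :
    ∑ l : Fin (k + 2), (-1 : F) ^ (l : ℕ) *
        (C.submatrix id (Fin.snoc j (i l))).det *
        (C.submatrix id (i ∘ l.succAbove)).det = 0 := by
  set w : Fin (k + 1) → F := fun r => (-1) ^ (r + k : ℕ) * det (C.submatrix r.succAbove j)
  have hminor : ∀ l, det (C.submatrix id (Fin.snoc j (i l))) = (w ᵥ* C.submatrix id i) l := by
    intro l
    rw [det_submatrix_snoc]
    simp only [vecMul, dotProduct, submatrix_apply, id, w]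
    exact Finset.sum_congr rfl fun r _ => by ring
  simp_rw [hminor]
  exact sum_neg_one_pow_mul_vecMul_mul_det_submatrix_succAbove (C.submatrix id i) w
end

section
/- For the orthogonal Grassmannian OG(k,2k) with respect to a diagonal bilinear form η with entries ±1, orthogonality C·η·Cᵀ = 0 implies that for any k-element subset I of {1,...,2k} with complement Ī, the Plücker coordinates satisfy |η|_I^I · p_I(C)² = (-1)^k |η|_Ī^Ī · p_Ī(C)², where |η|_I^I denotes the principal minor of η on rows/columns I. -/
open Matrix

/-- For the orthogonal Grassmannian OG(k,2k): orthogonality C·η·Cᵀ = 0 for a diagonal ±1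
form η implies |η|_I^I · p_I(C)² = (-1)^k |η|_Ī^Ī · p_Ī(C)² for complementary k-subsets. -/
theorem stmt_11 {F : Type*} [Field F] (k : ℕ) (d : Fin (2 * k) → F)
    (hd : ∀ i, d i = 1 ∨ d i = -1)
    (C : Matrix (Fin k) (Fin (2 * k)) F)
    (horth : C * Matrix.diagonal d * Cᵀ = 0)
    (I : Finset (Fin (2 * k))) (hI : I.card = k) (hIc : Iᶜ.card = k) :
    (∏ i ∈ I, d i) * ((C.submatrix id fun j => ((I.orderIsoOfFin hI) j).1).det) ^ 2 =
      (-1 : F) ^ k * (∏ i ∈ Iᶜ, d i) *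
        ((C.submatrix id fun j => ((Iᶜ.orderIsoOfFin hIc) j).1).det) ^ 2 := by
  set e := I.orderIsoOfFin hI with he
  set f := Iᶜ.orderIsoOfFin hIc with hf
  set A : Matrix (Fin k) (Fin k) F := C.submatrix id fun j => (e j).1 with hA
  set B : Matrix (Fin k) (Fin k) F := C.submatrix id fun j => (f j).1 with hB
  have sumI : ∀ g : Fin (2 * k) → F, ∑ j : Fin k, g (e j).1 = ∑ i ∈ I, g i := by
    intro g
    rw [← Finset.sum_attach I g]
    exact Fintype.sum_equiv e.toEquiv _ _ (fun j => rfl)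
  have sumIc : ∀ g : Fin (2 * k) → F, ∑ j : Fin k, g (f j).1 = ∑ i ∈ Iᶜ, g i := by
    intro g
    rw [← Finset.sum_attach Iᶜ g]
    exact Fintype.sum_equiv f.toEquiv _ _ (fun j => rfl)
  have key : A * Matrix.diagonal (fun j => d (e j).1) * Aᵀ
      = - (B * Matrix.diagonal (fun j => d (f j).1) * Bᵀ) := by
    ext a b
    have h0 := congrFun (congrFun horth a) b
    simp only [Matrix.mul_apply, Matrix.diagonal_apply, Matrix.transpose_apply,
      Matrix.zero_apply, hA, hB, Matrix.submatrix_apply, id_eq, Matrix.neg_apply,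
      mul_ite, mul_zero, ite_mul, zero_mul, Finset.sum_ite_eq, Finset.sum_ite_eq', Finset.mem_univ,
      if_true] at h0 ⊢
    rw [sumI (fun i => C a i * d i * C b i), sumIc (fun i => C a i * d i * C b i)]
    have hs := Finset.sum_add_sum_compl I (fun i => C a i * d i * C b i)
    rw [h0] at hs
    linear_combination hs
  have hdet := congrArg Matrix.det key
  rw [Matrix.det_neg] at hdet
  simp only [Matrix.det_mul, Matrix.det_diagonal, Matrix.det_transpose,
    Fintype.card_fin] at hdet
  have prodI : ∏ j : Fin k, d (e j).1 = ∏ i ∈ I, d i := by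
    rw [← Finset.prod_attach I d]
    exact Fintype.prod_equiv e.toEquiv _ _ (fun j => rfl)
  have prodIc : ∏ j : Fin k, d (f j).1 = ∏ i ∈ Iᶜ, d i := by
    rw [← Finset.prod_attach Iᶜ d]
    exact Fintype.prod_equiv f.toEquiv _ _ (fun j => rfl)
  rw [prodI, prodIc] at hdet
  linear_combination hdet
end

section
/- With η = diag(1,-1,1,...,-1) (k minus signs among 2k entries), the orthogonality constraint on a 2×4 matrix C = [[1,α,0,β],[0,γ,1,δ]] (gauge-fixed on columns 1,3) is equivalent to the 2×2 matrix [[α,β],[γ,δ]] being orthogonal (an element of O(2)); the positive branch is parametrized as α = sinθ, β = -cosθ, γ = cosθ, δ = sinθ, and all Plücker coordinates of C are nonnegative iff sinθ ≥ 0 and cosθ ≥ 0. -/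
/-!
Columns 1 and 3 of `C` form the identity and columns 2 and 4 form `A = !![α, β; γ, δ]`; as `η`
weights them by `+1` and `-1`, `C * η * Cᵀ = 1 - A * Aᵀ`. The six Plücker coordinates of `C` are
`γ, 1, δ, α, det A, -β`, which for `C(θ)` become `cos θ, 1, sin θ, sin θ, 1, cos θ`.
-/

open Matrix

section GaugeFixed

variable {R : Type*} [CommRing R]

theorem gaugeFixed_mul_diagonal_mul_transpose (α β γ δ : R) :
    !![1, α, 0, β; 0, γ, 1, δ] * diagonal ![(1 : R), -1, 1, -1] * !![1, α, 0, β; 0, γ, 1, δ]ᵀ =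
      1 - !![α, β; γ, δ] * !![α, β; γ, δ]ᵀ := by
  ext i j
  fin_cases i <;> fin_cases j <;>
    simp only [Matrix.sub_apply, mul_apply, Fin.sum_univ_four, Fin.sum_univ_two] <;> simp <;> ring

def plucker {n : ℕ} (C : Matrix (Fin 2) (Fin n) R) (i j : Fin n) : R :=
  C 0 i * C 1 j - C 0 j * C 1 i

theorem gaugeFixed_plucker_nonneg_iff [PartialOrder R] [IsOrderedRing R] (α β γ δ : R) :
    (∀ i j : Fin 4, i < j → 0 ≤ plucker !![1, α, 0, β; 0, γ, 1, δ] i j) ↔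
      0 ≤ α ∧ β ≤ 0 ∧ 0 ≤ γ ∧ 0 ≤ δ ∧ β * γ ≤ α * δ := by
  constructor
  · intro h
    have h01 := h 0 1 (by decide)
    have h03 := h 0 3 (by decide)
    have h12 := h 1 2 (by decide)
    have h13 := h 1 3 (by decide)
    have h23 := h 2 3 (by decide)
    simp [plucker] at h01 h03 h12 h13 h23
    exact ⟨h12, h23, h01, h03, h13⟩
  · rintro ⟨hα, hβ, hγ, hδ, hdet⟩ i j hij
    fin_cases i <;> fin_cases j <;> simp_all [plucker]

end GaugeFixed

theorem rotation_mul_transpose (θ : ℝ) :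
    !![Real.sin θ, -Real.cos θ; Real.cos θ, Real.sin θ] *
      !![Real.sin θ, -Real.cos θ; Real.cos θ, Real.sin θ]ᵀ = 1 := by
  have h := Real.sin_sq_add_cos_sq θ
  ext i j
  fin_cases i <;> fin_cases j <;> simp [Matrix.mul_apply, Fin.sum_univ_two] <;> nlinarith

/-- For the gauge-fixed 2×4 matrix C = [[1,α,0,β],[0,γ,1,δ]] with η = diag(1,-1,1,-1):
orthogonality C·η·Cᵀ = 0 is equivalent to [[α,β],[γ,δ]] ∈ O(2); the positive branch
C(θ) = [[1,sinθ,0,-cosθ],[0,cosθ,1,sinθ]] is orthogonal and all its Plücker coordinates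
are nonnegative iff sinθ ≥ 0 and cosθ ≥ 0. -/
theorem stmt_12 (α β γ δ θ : ℝ)
    (C : Matrix (Fin 2) (Fin 4) ℝ) (hC : C = !![1, α, 0, β; 0, γ, 1, δ])
    (Cθ : Matrix (Fin 2) (Fin 4) ℝ)
    (hCθ : Cθ = !![1, Real.sin θ, 0, -Real.cos θ; 0, Real.cos θ, 1, Real.sin θ])
    (η : Matrix (Fin 4) (Fin 4) ℝ) (hη : η = Matrix.diagonal ![(1 : ℝ), -1, 1, -1]) :
    (C * η * Cᵀ = 0 ↔ !![α, β; γ, δ] * (!![α, β; γ, δ])ᵀ = 1) ∧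
    Cθ * η * Cθᵀ = 0 ∧
    ((∀ i j : Fin 4, i < j → 0 ≤ Cθ 0 i * Cθ 1 j - Cθ 0 j * Cθ 1 i) ↔
      0 ≤ Real.sin θ ∧ 0 ≤ Real.cos θ) := by
  subst hC hCθ hη
  refine ⟨?_, ?_, ?_⟩
  · rw [gaugeFixed_mul_diagonal_mul_transpose, sub_eq_zero, eq_comm]
  · rw [gaugeFixed_mul_diagonal_mul_transpose, rotation_mul_transpose, sub_self]
  · have hdet : -Real.cos θ * Real.cos θ ≤ Real.sin θ * Real.sin θ := by
      nlinarith [sq_nonneg (Real.sin θ), sq_nonneg (Real.cos θ)]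
    refine (gaugeFixed_plucker_nonneg_iff _ _ _ _).trans ?_
    simp only [hdet, neg_nonpos, and_true]
    tauto
end

section
/- The push forward of the canonical form of [1,2] through the squaring map equals the canonical form of [1,4]: the map y = x² has two local inverses ±√y, and d log((√y - 1)/(√y - 2)) + d log((-√y - 1)/(-√y - 2)) = d log((y-1)/(y-4)). -/
/-!
The map `x ↦ x²` has the two local inverses `±s`, with derivatives `±1/(2s)`, so the push
forward of `dx/(x - a)` is `1/(2s) · (1/(s - a) + 1/(s + a)) = 1/(s² - a²)`, i.e. it is
`dy/(y - a²)`. The canonical form of `[1,2]` is `dx/(x - 1) - dx/(x - 2)`; by linearity its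
push forward is `dy/(y - 1) - dy/(y - 4)`, the canonical form of `[1,4]`.
-/

section

variable {K : Type*} [Field K]

/-- Coefficient of the push forward of `f(x) dx` along `x ↦ x²` at `y = s²`. -/
def sqPushforward (f : K → K) (s : K) : K :=
  1 / (2 * s) * f s + (-(1 / (2 * s))) * f (-s)

theorem sqPushforward_sub (f g : K → K) (s : K) :
    sqPushforward (fun x => f x - g x) s = sqPushforward f s - sqPushforward g s := by
  unfold sqPushforward
  ring

theorem sqPushforward_inv_sub [NeZero (2 : K)] {s : K} (a : K) (hs : s ≠ 0)
    (ha : s ^ 2 ≠ a ^ 2) :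
    sqPushforward (fun x => 1 / (x - a)) s = 1 / (s ^ 2 - a ^ 2) := by
  have hfac : s ^ 2 - a ^ 2 = (s - a) * (s + a) := by ring
  have hsq : s ^ 2 - a ^ 2 ≠ 0 := sub_ne_zero.mpr ha
  have hsub : s - a ≠ 0 := left_ne_zero_of_mul (hfac ▸ hsq)
  have hadd : s + a ≠ 0 := right_ne_zero_of_mul (hfac ▸ hsq)
  have hneg : -s - a ≠ 0 := by
    rw [show -s - a = -(s + a) by ring]
    exact neg_ne_zero.mpr hadd
  unfold sqPushforward
  field_simp
  ring

end

/-- Push forward of the canonical form of [1,2] through y = x²: the sum over the two local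
inverse branches ±√y of the pulled-back dlog coefficients equals the canonical-form
coefficient of [1,4]. -/
theorem stmt_15 (y s : ℂ) (hsy : s ^ 2 = y) (hs : s ≠ 0) (h1 : y ≠ 1) (h4 : y ≠ 4) :
    (1 / (2 * s)) * (1 / (s - 1) - 1 / (s - 2)) +
      (-(1 / (2 * s))) * (1 / (-s - 1) - 1 / (-s - 2)) =
    1 / (y - 1) - 1 / (y - 4) := by
  subst hsy
  have h1' : s ^ 2 ≠ 1 ^ 2 := by rwa [one_pow]
  have h4' : s ^ 2 ≠ 2 ^ 2 := by norm_num [h4]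
  calc _ = sqPushforward (fun x => 1 / (x - 1) - 1 / (x - 2)) s := rfl
    _ = 1 / (s ^ 2 - 1) - 1 / (s ^ 2 - 4) := by
      rw [sqPushforward_sub, sqPushforward_inv_sub 1 hs h1', sqPushforward_inv_sub 2 hs h4']
      norm_num
end

section
/- On the ABHY hyperplane, two crossing chords cannot vanish simultaneously: assume the variables X_{ij} satisfy X_{ij} + X_{i+1,j+1} - X_{i+1,j} - X_{i,j+1} = c_{ij} with c_{ij} > 0 for all 1 ≤ i < j < n, and X_{ab} ≥ 0 for all planar chords. Then for cyclically ordered indices i < j < k < l, X_{jk} + X_{il} = X_{ik} + X_{jl} - Σ_{i≤a<j, k≤b<l} c_{ab}; consequently X_{ik} = 0 and X_{jl} = 0 cannot hold simultaneously. -/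
/-!
Summing the ABHY relation over the rectangle `[i, j) × [k, l)` telescopes in both indices, so the
sum of the `c_{ab}` equals the mixed second difference `X_{ik} + X_{jl} - X_{jk} - X_{il}`. That sum is
positive, while `X_{jk}` and `X_{il}` are nonnegative, so `X_{ik}` and `X_{jl}` cannot both vanish.
-/

open Finset

theorem sum_Ico_sum_Ico_eq_of_mixed_diff {G : Type*} [AddCommGroup G] {X c : ℕ → ℕ → G}
    {i j k l : ℕ} (hij : i ≤ j) (hkl : k ≤ l)
    (hc : ∀ a ∈ Ico i j, ∀ b ∈ Ico k l,
      X a b + X (a + 1) (b + 1) - X (a + 1) b - X a (b + 1) = c a b) :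
    ∑ a ∈ Ico i j, ∑ b ∈ Ico k l, c a b = X i k + X j l - X j k - X i l := by
  have hrow : ∀ a ∈ Ico i j, ∑ b ∈ Ico k l, c a b
      = (X (a + 1) l - X (a + 1) k) - (X a l - X a k) := fun a ha => by
    rw [← sum_Ico_sub (fun b => X (a + 1) b) hkl, ← sum_Ico_sub (fun b => X a b) hkl,
      ← sum_sub_distrib]
    refine sum_congr rfl fun b hb => ?_
    rw [← hc a ha b hb]
    abel
  rw [sum_congr rfl hrow, sum_Ico_sub (fun a => X a l - X a k) hij]
  abel

/-- On the ABHY hyperplane, two crossing chords cannot vanish simultaneously: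
X_{jk} + X_{il} = X_{ik} + X_{jl} - Σ c_{ab}, hence X_{ik} = 0 and X_{jl} = 0 is impossible. -/
theorem stmt_16 (n : ℕ) (X c : ℕ → ℕ → ℝ)
    (hABHY : ∀ i j, 1 ≤ i → i < j → j < n →
      X i j + X (i + 1) (j + 1) - X (i + 1) j - X i (j + 1) = c i j)
    (hc : ∀ i j, 1 ≤ i → i < j → j < n → 0 < c i j)
    (hX : ∀ a b, 1 ≤ a → a < b → b ≤ n → 0 ≤ X a b)
    (i j k l : ℕ) (hi : 1 ≤ i) (hij : i < j) (hjk : j < k) (hkl : k < l) (hln : l ≤ n) :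
    (X j k + X i l =
      X i k + X j l - ∑ a ∈ Finset.Ico i j, ∑ b ∈ Finset.Ico k l, c a b) ∧
    ¬(X i k = 0 ∧ X j l = 0) := by
  have hsum : ∑ a ∈ Ico i j, ∑ b ∈ Ico k l, c a b = X i k + X j l - X j k - X i l :=
    sum_Ico_sum_Ico_eq_of_mixed_diff hij.le hkl.le fun a ha b hb => by
      rw [mem_Ico] at ha hb
      exact hABHY a b (by omega) (by omega) (by omega)
  have hpos : 0 < ∑ a ∈ Ico i j, ∑ b ∈ Ico k l, c a b := by
    refine sum_pos (fun a ha => sum_pos (fun b hb => ?_) ⟨k, by simpa⟩) ⟨i, by simpa⟩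
    rw [mem_Ico] at ha hb
    exact hc a b (by omega) (by omega) (by omega)
  refine ⟨by rw [hsum]; abel, fun ⟨hik, hjl⟩ => ?_⟩
  have hjk_nonneg := hX j k (by omega) hjk (by omega)
  have hil_nonneg := hX i l hi (by omega) hln
  linarith
end

section
/- Quadruple lightcone intersections in ℝ^{1,1}-style coordinates: in 2-dimensional space with lightcone coordinates λ = y¹+y⁰, λ̃ = y¹-y⁰ so that (y_i - y_j)² = (λ_i - λ_j)(λ̃_i - λ̃_j), given two points x_a, x_b with (x_a - x_b)² > 0, λ_a < λ_b, and λ̃_a < λ̃_b, the region Δ = {y : (y-x_a)² ≥ 0, (y-x_b)² ≥ 0, λ_a ≤ λ ≤ λ_b, λ̃_a ≤ λ̃ ≤ λ̃_b} is exactly the product of intervals [λ_a,λ_b] × [λ̃_a,λ̃_b], and its canonical form factorizes: d log((λ-λ_a)/(λ-λ_b)) ∧ d log((λ̃-λ̃_a)/(λ̃-λ̃_b)) = X_{ab}·d²y / ((y-x_a)²(y-x_b)²), where X_{ab} = (x_a-x_b)². -/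
/-! In lightcone coordinates the quadratic form factorizes,
`(u - v)² = (λᵤ - λᵥ)(λ̃ᵤ - λ̃ᵥ)`. On the box `[λ_a, λ_b] × [λ̃_a, λ̃_b]` both factors of
`(y - x_a)²` are nonnegative and both factors of `(y - x_b)²` are nonpositive, so the lightcone
conditions cutting out `Δ` hold automatically. The canonical form factorizes by partial
fractions, `1/(λ - λ_a) - 1/(λ - λ_b) = (λ_a - λ_b) / ((λ - λ_a)(λ - λ_b))`, in each variable. -/

theorem one_div_sub_sub_one_div_sub {K : Type*} [Field K] {l a b : K} (ha : l ≠ a) (hb : l ≠ b) :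
    1 / (l - a) - 1 / (l - b) = (a - b) / ((l - a) * (l - b)) := by
  rw [one_div, one_div, inv_sub_inv (sub_ne_zero.2 ha) (sub_ne_zero.2 hb), sub_sub_sub_cancel_left]

theorem dlog_ratio_mul_dlog_ratio {K : Type*} [Field K] {l t a b a' b' : K}
    (ha : l ≠ a) (hb : l ≠ b) (ha' : t ≠ a') (hb' : t ≠ b') :
    (1 / (l - a) - 1 / (l - b)) * (1 / (t - a') - 1 / (t - b')) =
      (a - b) * (a' - b') / ((l - a) * (t - a') * ((l - b) * (t - b'))) := by
  rw [one_div_sub_sub_one_div_sub ha hb, one_div_sub_sub_one_div_sub ha' hb', div_mul_div_comm]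
  ring

theorem stmt_19_general
    (N : (Fin 2 → ℝ) → ℝ) (hN : ∀ y, N y = -(y 0) ^ 2 + (y 1) ^ 2)
    (lam lamt : (Fin 2 → ℝ) → ℝ)
    (hlam : ∀ y, lam y = y 1 + y 0) (hlamt : ∀ y, lamt y = y 1 - y 0)
    (xa xb : Fin 2 → ℝ) :
    (∀ u v : Fin 2 → ℝ, N (u - v) = (lam u - lam v) * (lamt u - lamt v)) ∧
    ({y : Fin 2 → ℝ | 0 ≤ N (y - xa) ∧ 0 ≤ N (y - xb) ∧
        lam xa ≤ lam y ∧ lam y ≤ lam xb ∧ lamt xa ≤ lamt y ∧ lamt y ≤ lamt xb} =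
      {y : Fin 2 → ℝ | lam y ∈ Set.Icc (lam xa) (lam xb) ∧
        lamt y ∈ Set.Icc (lamt xa) (lamt xb)}) ∧
    (∀ y : Fin 2 → ℝ, lam y ≠ lam xa → lam y ≠ lam xb →
      lamt y ≠ lamt xa → lamt y ≠ lamt xb →
      (1 / (lam y - lam xa) - 1 / (lam y - lam xb)) *
        (1 / (lamt y - lamt xa) - 1 / (lamt y - lamt xb)) =
      N (xa - xb) / (N (y - xa) * N (y - xb))) := by
  have hfactor : ∀ u v : Fin 2 → ℝ, N (u - v) = (lam u - lam v) * (lamt u - lamt v) := by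
    intro u v
    simp only [hN, hlam, hlamt, Pi.sub_apply]
    ring
  refine ⟨hfactor, ?_, fun y hya hyb hta htb => ?_⟩
  · ext y
    simp only [Set.mem_ofPred_eq, Set.mem_Icc, hfactor]
    constructor
    · rintro ⟨-, -, hla, hlb, hta, htb⟩
      exact ⟨⟨hla, hlb⟩, hta, htb⟩
    · rintro ⟨⟨hla, hlb⟩, hta, htb⟩
      exact ⟨mul_nonneg (sub_nonneg.2 hla) (sub_nonneg.2 hta),
        mul_nonneg_of_nonpos_of_nonpos (sub_nonpos.2 hlb) (sub_nonpos.2 htb),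
        hla, hlb, hta, htb⟩
  · rw [hfactor, hfactor, hfactor]
    exact dlog_ratio_mul_dlog_ratio hya hyb hta htb

/-- The 2d toy model: in lightcone coordinates λ = y¹+y⁰, λ̃ = y¹-y⁰ the quadratic form
factorizes, the region Δ is the product of intervals [λ_a,λ_b] × [λ̃_a,λ̃_b], and its
canonical form factorizes as d log((λ-λ_a)/(λ-λ_b)) ∧ d log((λ̃-λ̃_a)/(λ̃-λ̃_b))
= X_{ab} dλ∧dλ̃ /((y-x_a)²(y-x_b)²). -/
theorem stmt_19
    (N : (Fin 2 → ℝ) → ℝ) (hN : ∀ y, N y = -(y 0) ^ 2 + (y 1) ^ 2)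
    (lam lamt : (Fin 2 → ℝ) → ℝ)
    (hlam : ∀ y, lam y = y 1 + y 0) (hlamt : ∀ y, lamt y = y 1 - y 0)
    (xa xb : Fin 2 → ℝ)
    (hsep : 0 < N (xa - xb))
    (h1 : lam xa < lam xb) (h2 : lamt xa < lamt xb) :
    (∀ u v : Fin 2 → ℝ, N (u - v) = (lam u - lam v) * (lamt u - lamt v)) ∧
    ({y : Fin 2 → ℝ | 0 ≤ N (y - xa) ∧ 0 ≤ N (y - xb) ∧
        lam xa ≤ lam y ∧ lam y ≤ lam xb ∧ lamt xa ≤ lamt y ∧ lamt y ≤ lamt xb} =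
      {y : Fin 2 → ℝ | lam y ∈ Set.Icc (lam xa) (lam xb) ∧
        lamt y ∈ Set.Icc (lamt xa) (lamt xb)}) ∧
    (∀ y : Fin 2 → ℝ, lam y ≠ lam xa → lam y ≠ lam xb →
      lamt y ≠ lamt xa → lamt y ≠ lamt xb →
      (1 / (lam y - lam xa) - 1 / (lam y - lam xb)) *
        (1 / (lamt y - lamt xa) - 1 / (lamt y - lamt xb)) =
      N (xa - xb) / (N (y - xa) * N (y - xb))) :=
  stmt_19_general N hN lam lamt hlam hlamt xa xb
end
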